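/- (Information density scaling for very noisy channels.) There exist a constant K > 0 and ζ₀ > 0, depending only on λ_max, |𝒳| and |𝒴|, such that for all ζ ∈ (0, ζ₀) and every x ∈ 𝒳: |E[i*(x,Y)] − ζ²·Ψ_{ζ,x}| ≤ K·ζ³ and |ν_{x,ζ} − 2ζ²·Ψ_{ζ,x}| ≤ K·ζ³, where Y ~ W_ζ(·|x). Consequently, for x with E[i*(x,Y)] = C_ζ one has |ν_{x,ζ} − 2C_ζ| ≤ K·ζ³, and for x with E[i*(x,Y)] = C_ζ − ρ_{ζ,x} (where ρ_{ζ,x} > 0) one has |ν_{x,ζ} − 2(C_ζ − ρ_{ζ,x})| ≤ K·ζ³. -/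

import Mathlib

open MeasureTheory Real Filter Set
open scoped BigOperators ENNReal Classical

noncomputable section

namespace Paper

variable {X Y : Type*} [Fintype X] [Fintype Y]

/-- `P` is a probability mass function on the finite alphabet `X`. -/
def IsDist (P : X → ℝ) : Prop := (∀ x, 0 ≤ P x) ∧ ∑ x, P x = 1

/-- `W` is a discrete memoryless channel (a stochastic matrix). -/
def IsChannel (W : X → Y → ℝ) : Prop := ∀ x, IsDist (W x)

/-- `W` has no all-zero column. -/
def NoZeroColumn (W : X → Y → ℝ) : Prop := ∀ y, ∃ x, 0 < W x y

/-- Output distribution induced by input distribution `P` through `W`. -/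
def outDist (P : X → ℝ) (W : X → Y → ℝ) (y : Y) : ℝ := ∑ x, P x * W x y

/-- Mutual information `I(P; W)` (in nats). -/
def mutInfo (P : X → ℝ) (W : X → Y → ℝ) : ℝ :=
  ∑ x, ∑ y, P x * W x y * Real.log (W x y / outDist P W y)

/-- Shannon capacity `C`. -/
def capacity (W : X → Y → ℝ) : ℝ :=
  sSup {c | ∃ P, IsDist P ∧ mutInfo P W = c}

/-- The set of capacity-achieving input distributions `Π*`. -/
def capacityAchievers (W : X → Y → ℝ) : Set (X → ℝ) :=
  {P | IsDist P ∧ mutInfo P W = capacity W}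

/-- The (unique) capacity-achieving output distribution `q*`. -/
def qStar (W : X → Y → ℝ) : Y → ℝ :=
  if h : (capacityAchievers W).Nonempty then outDist h.choose W else fun _ => 0

section Aux

lemma log_taylor2' {t : ℝ} (ht : |t| ≤ 1/2) :
    |Real.log (1+t) - (t - t^2/2)| ≤ 2 * |t|^3 := by
  have h1 : |(-t)| < 1 := by rw [abs_neg]; linarith
  have key := Real.abs_log_sub_add_sum_range_le h1 2
  have hs : (∑ i ∈ Finset.range 2, (-t) ^ (i + 1) / (i + 1)) = -t + t^2/2 := by
    simp [Finset.sum_range_succ]; ring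
  rw [hs, abs_neg, show (1:ℝ) - -t = 1 + t by ring] at key
  rw [show Real.log (1+t) - (t - t^2/2) = -t + t^2/2 + Real.log (1+t) by ring]
  refine key.trans ?_
  have ht3 : |t|^(2+1) = |t|^3 := by norm_num
  rw [ht3, div_le_iff₀ (by linarith)]
  have h4 : |t|^3 * |t| ≤ |t|^3 * (1/2) := mul_le_mul_of_nonneg_left ht (by positivity)
  nlinarith [abs_nonneg t, pow_nonneg (abs_nonneg t) 3]

lemma log_taylor1' {t : ℝ} (ht : |t| ≤ 1/2) :
    |Real.log (1+t) - t| ≤ 2 * t^2 := by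
  have h1 : |(-t)| < 1 := by rw [abs_neg]; linarith
  have key := Real.abs_log_sub_add_sum_range_le h1 1
  have hs : (∑ i ∈ Finset.range 1, (-t) ^ (i + 1) / (i + 1)) = -t := by simp
  rw [hs, abs_neg, show (1:ℝ) - -t = 1 + t by ring] at key
  rw [show Real.log (1+t) - t = -t + Real.log (1+t) by ring]
  refine key.trans ?_
  have ht2 : |t|^(1+1) = t^2 := by
    rw [pow_succ, pow_one, ← abs_mul, ← sq, abs_of_nonneg (sq_nonneg t)]
  rw [ht2, div_le_iff₀ (by linarith)]
  have h4 : t^2 * |t| ≤ t^2 * (1/2) := mul_le_mul_of_nonneg_left ht (by positivity)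
  nlinarith [sq_nonneg t]

set_option maxHeartbeats 1000000 in
lemma pointwise_est {u v m : ℝ} (hum : |u| ≤ m) (hvm : |v| ≤ m) (hm : m ≤ 1/4) :
    |(1+u) * (Real.log (1+u) - Real.log (1+v)) - ((u-v) + (u-v)^2/2)| ≤ 6 * m^3 ∧
    |(1+u) * (Real.log (1+u) - Real.log (1+v))^2 - (u-v)^2| ≤ 17 * m^3 := by
  have hm0 : 0 ≤ m := (abs_nonneg u).trans hum
  have hu2 : |u| ≤ 1/2 := by linarith
  have hv2 : |v| ≤ 1/2 := by linarith
  set eu := Real.log (1+u) - (u - u^2/2) with heu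
  set ev := Real.log (1+v) - (v - v^2/2) with hev
  have hbu : |eu| ≤ 2 * m^3 := by
    refine (log_taylor2' hu2).trans ?_
    gcongr
  have hbv : |ev| ≤ 2 * m^3 := by
    refine (log_taylor2' hv2).trans ?_
    gcongr
  have hlu : Real.log (1+u) = (u - u^2/2) + eu := by rw [heu]; ring
  have hlv : Real.log (1+v) = (v - v^2/2) + ev := by rw [hev]; ring
  clear_value eu ev
  have hmu : |1 + u| ≤ 5/4 := by
    calc |1 + u| ≤ |(1:ℝ)| + |u| := abs_add_le 1 u
      _ ≤ 5/4 := by rw [abs_one]; linarith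
  have hu3 : |u|^2 ≤ m^2 := by gcongr
  have hv3 : |v|^2 ≤ m^2 := by gcongr
  constructor
  · rw [hlu, hlv,
      show (1+u) * (((u - u^2/2) + eu) - ((v - v^2/2) + ev)) - ((u-v) + (u-v)^2/2)
        = (1+u) * (eu - ev) - u*(u^2-v^2)/2 by ring]
    calc |(1+u) * (eu - ev) - u*(u^2-v^2)/2|
        ≤ |(1+u) * (eu - ev)| + |u*(u^2-v^2)/2| := abs_sub _ _
      _ = |1+u| * |eu - ev| + |u| * |u^2-v^2| / 2 := by
          rw [abs_mul, abs_div, abs_mul]; norm_num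
      _ ≤ (5/4) * (4*m^3) + m * (2*m^2) / 2 := by
          gcongr
          · exact (abs_sub _ _).trans (by linarith)
          · calc |u^2 - v^2| ≤ |u^2| + |v^2| := abs_sub _ _
              _ = |u|^2 + |v|^2 := by
                  rw [sq_abs, sq_abs, abs_of_nonneg (sq_nonneg u), abs_of_nonneg (sq_nonneg v)]
              _ ≤ 2*m^2 := by linarith
      _ ≤ 6 * m^3 := by ring_nf; nlinarith
  · set i := Real.log (1+u) - Real.log (1+v) with hi
    have hidef : i = (u - v) + (-(u^2-v^2)/2 + (eu - ev)) := by rw [hi, hlu, hlv]; ring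
    set r := -(u^2-v^2)/2 + (eu - ev) with hr
    clear_value i r
    have hrb : |r| ≤ 2 * m^2 := by
      calc |r| ≤ |(u^2-v^2)|/2 + |eu - ev| := by
            rw [hr]; refine (abs_add_le _ _).trans ?_
            rw [abs_div, abs_neg]; norm_num
        _ ≤ (2*m^2)/2 + 4*m^3 := by
            gcongr
            · calc |u^2 - v^2| ≤ |u^2| + |v^2| := abs_sub _ _
                _ = |u|^2 + |v|^2 := by
                    rw [sq_abs, sq_abs, abs_of_nonneg (sq_nonneg u), abs_of_nonneg (sq_nonneg v)]
                _ ≤ 2*m^2 := by linarith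
            · exact (abs_sub _ _).trans (by linarith)
        _ ≤ 2 * m^2 := by nlinarith
    have huv : |u - v| ≤ 2*m := (abs_sub _ _).trans (by linarith)
    have hib : |i| ≤ 3*m := by
      rw [hidef]
      calc |(u-v) + r| ≤ |u-v| + |r| := abs_add_le _ _
        _ ≤ 2*m + 2*m^2 := by linarith
        _ ≤ 3*m := by nlinarith
    have hkey : (1+u) * i^2 - (u-v)^2 = (1+u) * (r * (i + (u-v))) + u * (u-v)^2 := by
      rw [hidef]; ring
    rw [hkey]
    have hsum : |i + (u-v)| ≤ 5*m := (abs_add_le _ _).trans (by linarith)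
    have e1 : |(1+u) * (r * (i + (u-v)))| ≤ (5/4) * ((2*m^2) * (5*m)) := by
      rw [abs_mul, abs_mul]
      have h1 : |r| * |i + (u-v)| ≤ (2*m^2) * (5*m) :=
        mul_le_mul hrb hsum (abs_nonneg _) (by positivity)
      exact mul_le_mul hmu h1 (by positivity) (by norm_num)
    have e2 : |u * (u-v)^2| ≤ m * (2*m)^2 := by
      rw [abs_mul, abs_pow]
      have h2 : |u-v|^2 ≤ (2*m)^2 := pow_le_pow_left₀ (abs_nonneg _) huv 2
      exact mul_le_mul hum h2 (by positivity) hm0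
    calc |(1+u) * (r * (i + (u-v))) + u * (u-v)^2|
        ≤ |(1+u) * (r * (i + (u-v)))| + |u * (u-v)^2| := abs_add_le _ _
      _ ≤ (5/4) * ((2*m^2) * (5*m)) + m * (2*m)^2 := by linarith
      _ ≤ 17 * m^3 := by nlinarith

lemma achiever_exists {X Y : Type*} [Fintype X] [Fintype Y] (W : X → Y → ℝ) [Nonempty X]
    (hW : ∀ x y, 0 < W x y) : (capacityAchievers W).Nonempty := by
  classical
  have hS : IsCompact (stdSimplex ℝ X) := isCompact_stdSimplex ℝ X
  have hSne : (stdSimplex ℝ X).Nonempty := by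
    obtain ⟨x₀⟩ := (inferInstance : Nonempty X)
    exact ⟨fun i => if i = x₀ then 1 else 0, fun i => by positivity,
      by simp [Finset.sum_ite_eq']⟩
  have hout : ∀ P ∈ stdSimplex ℝ X, ∀ y, 0 < outDist P W y := by
    intro P hP y
    have hx : ∃ x, 0 < P x := by
      by_contra h
      push_neg at h
      have : ∑ x, P x ≤ 0 := Finset.sum_nonpos (fun x _ => h x)
      rw [hP.2] at this; linarith
    obtain ⟨x₁, hx₁⟩ := hx
    refine Finset.sum_pos' (fun x _ => mul_nonneg (hP.1 x) (hW x y).le) ?_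
    exact ⟨x₁, Finset.mem_univ _, mul_pos hx₁ (hW x₁ y)⟩
  have hcont : ContinuousOn (fun P => mutInfo P W) (stdSimplex ℝ X) := by
    unfold mutInfo
    refine continuousOn_finset_sum _ (fun x _ => continuousOn_finset_sum _ (fun y _ => ?_))
    refine ContinuousOn.mul (ContinuousOn.mul ?_ continuousOn_const) ?_
    · exact (continuous_apply x).continuousOn
    · refine ContinuousOn.log ?_ ?_
      · refine ContinuousOn.div continuousOn_const ?_ ?_
        · unfold outDist
          exact continuousOn_finset_sum _ (fun x' _ =>
            ((continuous_apply x').continuousOn).mul continuousOn_const)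
        · intro P hP; exact (hout P hP y).ne'
      · intro P hP
        exact div_ne_zero (hW x y).ne' (hout P hP y).ne'
  obtain ⟨P₀, hP₀, hmax⟩ := hS.exists_isMaxOn hSne hcont
  have hgreat : IsGreatest {c | ∃ P, IsDist P ∧ mutInfo P W = c} (mutInfo P₀ W) := by
    constructor
    · exact ⟨P₀, hP₀, rfl⟩
    · rintro c ⟨P, hP, rfl⟩
      exact hmax hP
  refine ⟨P₀, hP₀, ?_⟩
  rw [capacity, hgreat.csSup_eq]

lemma wsum_abs_le {Y : Type*} [Fintype Y] (Γ : Y → ℝ) (hΓ0 : ∀ y, 0 ≤ Γ y)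
    (hΓ1 : ∑ y, Γ y = 1) (D : Y → ℝ) (c : ℝ) (hD : ∀ y, |D y| ≤ c) :
    |∑ y, Γ y * D y| ≤ c := by
  calc |∑ y, Γ y * D y| ≤ ∑ y, |Γ y * D y| := Finset.abs_sum_le_sum_abs _ _
    _ = ∑ y, Γ y * |D y| := by
        refine Finset.sum_congr rfl (fun y _ => ?_)
        rw [abs_mul, abs_of_nonneg (hΓ0 y)]
    _ ≤ ∑ y, Γ y * c :=
        Finset.sum_le_sum (fun y _ => mul_le_mul_of_nonneg_left (hD y) (hΓ0 y))
    _ = c := by rw [← Finset.sum_mul, hΓ1, one_mul]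

end Aux

/-- The information density `i*(x,y) = log (W(y|x)/q*(y))`. -/
def iStar (W : X → Y → ℝ) (x : X) (y : Y) : ℝ := Real.log (W x y / qStar W y)

/-- `ν_x = Var[i*(x,Y)]`, `Y ~ W(·|x)`. -/
def nu (W : X → Y → ℝ) (x : X) : ℝ :=
  ∑ y, W x y * (iStar W x y) ^ 2 - (∑ y, W x y * iStar W x y) ^ 2

/-- `V_min`. -/
def Vmin (W : X → Y → ℝ) : ℝ :=
  sInf {v | ∃ P ∈ capacityAchievers W, v = ∑ x, P x * nu W x}

/-- `V_max`. -/
def Vmax (W : X → Y → ℝ) : ℝ :=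
  sSup {v | ∃ P ∈ capacityAchievers W, v = ∑ x, P x * nu W x}

/-- `V_ε`. -/
def Veps (W : X → Y → ℝ) (ε : ℝ) : ℝ := if ε < 1/2 then Vmin W else Vmax W

/-- `ν_min = min_x ν_x`. -/
def numin (W : X → Y → ℝ) [Nonempty X] : ℝ := ⨅ x, nu W x

/-- `ν_max = max_x ν_x`. -/
def numax (W : X → Y → ℝ) [Nonempty X] : ℝ := ⨆ x, nu W x

/-- Average error probability of the feedback code `(enc, dec)` with `M` messages
and blocklength `n`. -/
def errProb (W : X → Y → ℝ) (n M : ℕ) (enc : Fin M → List Y → X)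
    (dec : (Fin n → Y) → Fin M) : ℝ :=
  (M : ℝ)⁻¹ * ∑ m : Fin M, ∑ y : Fin n → Y,
    (∏ k : Fin n, W (enc m ((List.ofFn y).take (k : ℕ))) (y k)) *
      (if dec y = m then 0 else 1)

/-- Minimum average error probability of `(n,R)` feedback codes. -/
def minErr (W : X → Y → ℝ) (n : ℕ) (R : ℝ) : ℝ :=
  sInf {e | ∃ enc dec, e = errProb W n ⌈Real.exp (n * R)⌉₊ enc dec}

/-- `M*_fb(n, ε)`. -/
def Mfb (W : X → Y → ℝ) (n : ℕ) (ε : ℝ) : ℝ :=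
  sSup {m | ∃ R : ℝ, m = (⌈Real.exp (n * R)⌉₊ : ℝ) ∧ minErr W n R ≤ ε}

/-- Standard Gaussian density `φ`. -/
def gpdf (u : ℝ) : ℝ := (Real.sqrt (2 * Real.pi))⁻¹ * Real.exp (-u ^ 2 / 2)

/-- Standard Gaussian CDF `Φ`. -/
def gcdf (t : ℝ) : ℝ := ∫ u in Set.Iic t, gpdf u

/-- Inverse Gaussian CDF `Φ⁻¹`. -/
def gcdfInv : ℝ → ℝ := Function.invFun gcdf

/-- The sequence `(log M*_fb(n,ε) - nC)/√n` whose liminf/limsup is the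
second-order coding rate with feedback. -/
def SOfb (W : X → Y → ℝ) (ε : ℝ) (n : ℕ) : ℝ :=
  (Real.log (Mfb W n ε) - n * capacity W) / Real.sqrt n

/-- The very noisy channel `W_ζ(y|x) = Γ(y)(1 + ζ λ(x,y))`. -/
def VNC (Γ : Y → ℝ) (lam : X → Y → ℝ) (ζ : ℝ) : X → Y → ℝ :=
  fun x y => Γ y * (1 + ζ * lam x y)

/-- The constant `𝐂` governing the very noisy capacity. -/
def bigC (Γ : Y → ℝ) (lam : X → Y → ℝ) : ℝ :=
  sSup {c | ∃ P : X → ℝ, IsDist P ∧ c = 1 / 2 * ∑ y, Γ y *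
    ((∑ x, P x * lam x y ^ 2) - (∑ x, P x * lam x y) ^ 2)}

/-- `λ*_ζ(y)`, defined through `q*_ζ(y) = Γ(y)(1 + ζ λ*_ζ(y))`. -/
def lamStar (Γ : Y → ℝ) (lam : X → Y → ℝ) (ζ : ℝ) (y : Y) : ℝ :=
  (qStar (VNC Γ lam ζ) y / Γ y - 1) / ζ

/-- `Ψ_{ζ,x} = (1/2) Σ_y Γ(y)(λ(x,y) - λ*_ζ(y))²`. -/
def PsiVNC (Γ : Y → ℝ) (lam : X → Y → ℝ) (ζ : ℝ) (x : X) : ℝ :=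
  1 / 2 * ∑ y, Γ y * (lam x y - lamStar Γ lam ζ y) ^ 2

/-- `E[i*(x,Y)]`, `Y ~ W_ζ(·|x)`. -/
def meanInfoVNC (Γ : Y → ℝ) (lam : X → Y → ℝ) (ζ : ℝ) (x : X) : ℝ :=
  ∑ y, VNC Γ lam ζ x y * iStar (VNC Γ lam ζ) x y

/-- `ρ_{ζ,x} = C_ζ - E[i*(x,Y)]`. -/
def rhoVNC (Γ : Y → ℝ) (lam : X → Y → ℝ) (ζ : ℝ) (x : X) : ℝ :=
  capacity (VNC Γ lam ζ) - meanInfoVNC Γ lam ζ x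

/-- Lemma (Information density scaling for very noisy channels). -/
theorem vnc_information_density_scaling
    {X Y : Type*} [Fintype X] [Fintype Y]
    (Γ : Y → ℝ) (hΓ : IsDist Γ) (hΓpos : ∀ y, 0 < Γ y)
    (lam : X → Y → ℝ) (hlam : ∀ x, ∑ y, Γ y * lam x y = 0) :
    ∃ K : ℝ, 0 < K ∧ ∃ ζ₀ : ℝ, 0 < ζ₀ ∧ ∀ ζ : ℝ, ζ ∈ Set.Ioo 0 ζ₀ → ∀ x : X,
      |meanInfoVNC Γ lam ζ x - ζ ^ 2 * PsiVNC Γ lam ζ x| ≤ K * ζ ^ 3 ∧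
      |nu (VNC Γ lam ζ) x - 2 * ζ ^ 2 * PsiVNC Γ lam ζ x| ≤ K * ζ ^ 3 ∧
      (meanInfoVNC Γ lam ζ x = capacity (VNC Γ lam ζ) →
        |nu (VNC Γ lam ζ) x - 2 * capacity (VNC Γ lam ζ)| ≤ K * ζ ^ 3) ∧
      (0 < rhoVNC Γ lam ζ x →
        |nu (VNC Γ lam ζ) x - 2 * (capacity (VNC Γ lam ζ) - rhoVNC Γ lam ζ x)| ≤
          K * ζ ^ 3) := by
  classical
  rcases isEmpty_or_nonempty X with hX | hX
  · exact ⟨1, one_pos, 1, one_pos, fun ζ hζ x => (hX.false x).elim⟩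
  set L : ℝ := 1 + ∑ x, ∑ y, |lam x y| with hLdef
  have hLsum : 0 ≤ ∑ x, ∑ y, |lam x y| :=
    Finset.sum_nonneg fun x _ => Finset.sum_nonneg fun y _ => abs_nonneg _
  have hL1 : 1 ≤ L := by rw [hLdef]; linarith
  have hL0 : 0 < L := by linarith
  have hLb : ∀ x y, |lam x y| ≤ L := by
    intro x y
    have h1 : |lam x y| ≤ ∑ y', |lam x y'| :=
      Finset.single_le_sum (f := fun y' => |lam x y'|) (fun y' _ => abs_nonneg _)
        (Finset.mem_univ y)
    have h2 : (∑ y', |lam x y'|) ≤ ∑ x', ∑ y', |lam x' y'| :=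
      Finset.single_le_sum (f := fun x' => ∑ y', |lam x' y'|)
        (fun x' _ => Finset.sum_nonneg (fun y' _ => abs_nonneg _))
        (Finset.mem_univ x)
    rw [hLdef]; linarith
  clear_value L
  refine ⟨100 * L^3, by positivity, 1/(4*L), by positivity, fun ζ hζ x => ?_⟩
  obtain ⟨hζ0, hζ1⟩ := hζ
  have hζL : ζ * L ≤ 1/4 := by
    rw [lt_div_iff₀ (by positivity)] at hζ1
    nlinarith
  have hζL0 : 0 ≤ ζ * L := by positivity
  have habs : ∀ (c : ℝ), |c| ≤ L → |ζ * c| ≤ ζ * L := by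
    intro c hc
    rw [abs_mul, abs_of_nonneg hζ0.le]
    exact mul_le_mul_of_nonneg_left hc hζ0.le
  have hWpos : ∀ x' y, 0 < VNC Γ lam ζ x' y := by
    intro x' y
    have h := abs_le.mp ((habs _ (hLb x' y)).trans hζL)
    exact mul_pos (hΓpos y) (by linarith [h.1])
  have hach : (capacityAchievers (VNC Γ lam ζ)).Nonempty := achiever_exists _ hWpos
  set P₀ := hach.choose with hP₀def
  have hP₀ : IsDist P₀ := hach.choose_spec.1
  have hq : qStar (VNC Γ lam ζ) = outDist P₀ (VNC Γ lam ζ) := by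
    simp only [qStar, dif_pos hach]
    rfl
  set b : Y → ℝ := fun y => ∑ x', P₀ x' * lam x' y with hbdef
  have hbb : ∀ y, |b y| ≤ L := by
    intro y
    calc |b y| ≤ ∑ x', |P₀ x' * lam x' y| := Finset.abs_sum_le_sum_abs _ _
      _ ≤ ∑ x', P₀ x' * L := by
          refine Finset.sum_le_sum fun x' _ => ?_
          rw [abs_mul, abs_of_nonneg (hP₀.1 x')]
          exact mul_le_mul_of_nonneg_left (hLb x' y) (hP₀.1 x')
      _ = L := by rw [← Finset.sum_mul, hP₀.2, one_mul]
  have hout : ∀ y, outDist P₀ (VNC Γ lam ζ) y = Γ y * (1 + ζ * b y) := by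
    intro y
    rw [outDist]
    have h1 : ∀ x' ∈ Finset.univ, P₀ x' * VNC Γ lam ζ x' y
        = Γ y * P₀ x' + (Γ y * ζ) * (P₀ x' * lam x' y) := by
      intro x' _; rw [VNC]; ring
    rw [Finset.sum_congr rfl h1, Finset.sum_add_distrib, ← Finset.mul_sum, ← Finset.mul_sum,
      hP₀.2]
    simp only [hbdef]
    ring
  have hbpos : ∀ y, 0 < 1 + ζ * b y := by
    intro y
    have h := abs_le.mp ((habs _ (hbb y)).trans hζL)
    linarith [h.1]
  have hapos : ∀ y, 0 < 1 + ζ * lam x y := by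
    intro y
    have h := abs_le.mp ((habs _ (hLb x y)).trans hζL)
    linarith [h.1]
  have hqval : ∀ y, qStar (VNC Γ lam ζ) y = Γ y * (1 + ζ * b y) := by
    intro y; rw [hq, hout]
  have hlamStar : ∀ y, lamStar Γ lam ζ y = b y := by
    intro y
    have h1 : Γ y ≠ 0 := (hΓpos y).ne'
    have h2 : ζ ≠ 0 := hζ0.ne'
    rw [lamStar, hqval]
    field_simp
    ring
  have hiStar : ∀ y, iStar (VNC Γ lam ζ) x y
      = Real.log (1 + ζ * lam x y) - Real.log (1 + ζ * b y) := by
    intro y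
    rw [iStar, hqval, VNC,
      mul_div_mul_left _ _ (hΓpos y).ne']
    exact Real.log_div (hapos y).ne' (hbpos y).ne'
  -- basic sum identities
  have hΓb : ∑ y, Γ y * b y = 0 := by
    have h1 : ∀ y ∈ Finset.univ, Γ y * b y = ∑ x' : X, P₀ x' * (Γ y * lam x' y) := by
      intro y _
      simp only [hbdef]
      rw [Finset.mul_sum]
      exact Finset.sum_congr rfl (fun x' _ => by ring)
    rw [Finset.sum_congr rfl h1, Finset.sum_comm]
    refine Finset.sum_eq_zero (fun x' _ => ?_)
    rw [← Finset.mul_sum, hlam x', mul_zero]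
  have hsum0 : ∑ y, Γ y * (ζ * lam x y - ζ * b y) = 0 := by
    have h1 : ∀ y ∈ Finset.univ, Γ y * (ζ * lam x y - ζ * b y)
        = ζ * (Γ y * lam x y) - ζ * (Γ y * b y) := by intro y _; ring
    rw [Finset.sum_congr rfl h1, Finset.sum_sub_distrib, ← Finset.mul_sum, ← Finset.mul_sum,
      hlam x, hΓb]
    ring
  have hPsi : PsiVNC Γ lam ζ x = 1/2 * ∑ y, Γ y * (lam x y - b y)^2 := by
    rw [PsiVNC]
    congr 1
    exact Finset.sum_congr rfl (fun y _ => by rw [hlamStar y])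
  have hPsi0 : 0 ≤ PsiVNC Γ lam ζ x := by
    rw [hPsi]
    have : 0 ≤ ∑ y, Γ y * (lam x y - b y)^2 :=
      Finset.sum_nonneg fun y _ => mul_nonneg (hΓpos y).le (sq_nonneg _)
    linarith
  have hPsiB : PsiVNC Γ lam ζ x ≤ 2 * L^2 := by
    rw [hPsi]
    have h : ∀ y ∈ Finset.univ, Γ y * (lam x y - b y)^2 ≤ Γ y * (2*L)^2 := by
      intro y _
      refine mul_le_mul_of_nonneg_left ?_ (hΓpos y).le
      have habd : |lam x y - b y| ≤ 2*L := (abs_sub _ _).trans (by linarith [hLb x y, hbb y])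
      calc (lam x y - b y)^2 = |lam x y - b y|^2 := (sq_abs _).symm
        _ ≤ (2*L)^2 := pow_le_pow_left₀ (abs_nonneg _) habd 2
    calc 1/2 * ∑ y, Γ y * (lam x y - b y)^2 ≤ 1/2 * ∑ y, Γ y * (2*L)^2 :=
        mul_le_mul_of_nonneg_left (Finset.sum_le_sum h) (by norm_num)
      _ = 2 * L^2 := by rw [← Finset.sum_mul, hΓ.2]; ring
  have hsum2 : ∑ y, Γ y * (ζ * lam x y - ζ * b y)^2
      = ζ^2 * ∑ y, Γ y * (lam x y - b y)^2 := by
    rw [Finset.mul_sum]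
    exact Finset.sum_congr rfl (fun y _ => by ring)
  have hsum2' : ∑ y, Γ y * (ζ * lam x y - ζ * b y)^2 = 2 * ζ^2 * PsiVNC Γ lam ζ x := by
    rw [hsum2, hPsi]; ring
  -- mean estimate
  have hmean : meanInfoVNC Γ lam ζ x
      = ∑ y, Γ y * ((1 + ζ * lam x y) *
          (Real.log (1 + ζ * lam x y) - Real.log (1 + ζ * b y))) := by
    rw [meanInfoVNC]
    refine Finset.sum_congr rfl (fun y _ => ?_)
    rw [hiStar y, VNC]; ring
  have hsm : ∑ y, Γ y * ((ζ * lam x y - ζ * b y) + (ζ * lam x y - ζ * b y)^2/2)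
      = ζ^2 * PsiVNC Γ lam ζ x := by
    have h1 : ∀ y ∈ Finset.univ,
        Γ y * ((ζ * lam x y - ζ * b y) + (ζ * lam x y - ζ * b y)^2/2)
          = Γ y * (ζ * lam x y - ζ * b y) + (Γ y * (ζ * lam x y - ζ * b y)^2)/2 := by
      intro y _; ring
    rw [Finset.sum_congr rfl h1, Finset.sum_add_distrib, hsum0, ← Finset.sum_div, hsum2']
    ring
  have hmean_est : |meanInfoVNC Γ lam ζ x - ζ^2 * PsiVNC Γ lam ζ x| ≤ 6 * L^3 * ζ^3 := by
    have hdiff : meanInfoVNC Γ lam ζ x - ζ^2 * PsiVNC Γ lam ζ x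
        = ∑ y, Γ y * ((1 + ζ * lam x y) *
            (Real.log (1 + ζ * lam x y) - Real.log (1 + ζ * b y))
            - ((ζ * lam x y - ζ * b y) + (ζ * lam x y - ζ * b y)^2/2)) := by
      rw [hmean, ← hsm, ← Finset.sum_sub_distrib]
      exact Finset.sum_congr rfl (fun y _ => by ring)
    rw [hdiff]
    have hb := wsum_abs_le Γ (fun y => (hΓpos y).le) hΓ.2
      (fun y => (1 + ζ * lam x y) *
          (Real.log (1 + ζ * lam x y) - Real.log (1 + ζ * b y))
          - ((ζ * lam x y - ζ * b y) + (ζ * lam x y - ζ * b y)^2/2))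
      (6*(ζ*L)^3)
      (fun y => (pointwise_est (habs _ (hLb x y)) (habs _ (hbb y)) hζL).1)
    exact hb.trans (le_of_eq (by ring))
  -- second moment estimate
  have hS2 : ∑ y, VNC Γ lam ζ x y * (iStar (VNC Γ lam ζ) x y)^2
      = ∑ y, Γ y * ((1 + ζ * lam x y) *
          (Real.log (1 + ζ * lam x y) - Real.log (1 + ζ * b y))^2) :=
    Finset.sum_congr rfl (fun y _ => by rw [hiStar y, VNC]; ring)
  have hS2_est : |(∑ y, VNC Γ lam ζ x y * (iStar (VNC Γ lam ζ) x y)^2)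
      - 2 * ζ^2 * PsiVNC Γ lam ζ x| ≤ 17 * L^3 * ζ^3 := by
    have hdiff : (∑ y, VNC Γ lam ζ x y * (iStar (VNC Γ lam ζ) x y)^2)
        - 2 * ζ^2 * PsiVNC Γ lam ζ x
        = ∑ y, Γ y * ((1 + ζ * lam x y) *
            (Real.log (1 + ζ * lam x y) - Real.log (1 + ζ * b y))^2
            - (ζ * lam x y - ζ * b y)^2) := by
      rw [hS2, ← hsum2', ← Finset.sum_sub_distrib]
      exact Finset.sum_congr rfl (fun y _ => by ring)
    rw [hdiff]
    have hb := wsum_abs_le Γ (fun y => (hΓpos y).le) hΓ.2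
      (fun y => (1 + ζ * lam x y) *
          (Real.log (1 + ζ * lam x y) - Real.log (1 + ζ * b y))^2
          - (ζ * lam x y - ζ * b y)^2)
      (17*(ζ*L)^3)
      (fun y => (pointwise_est (habs _ (hLb x y)) (habs _ (hbb y)) hζL).2)
    exact hb.trans (le_of_eq (by ring))
  -- variance estimate
  have hnu : nu (VNC Γ lam ζ) x
      = (∑ y, VNC Γ lam ζ x y * (iStar (VNC Γ lam ζ) x y)^2)
        - (meanInfoVNC Γ lam ζ x)^2 := by
    rw [nu, meanInfoVNC]
  have hTb : |meanInfoVNC Γ lam ζ x| ≤ 4 * ζ^2 * L^2 := by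
    have h1 : |ζ^2 * PsiVNC Γ lam ζ x| ≤ ζ^2 * (2 * L^2) := by
      rw [abs_of_nonneg (by positivity)]
      exact mul_le_mul_of_nonneg_left hPsiB (by positivity)
    calc |meanInfoVNC Γ lam ζ x|
        = |(meanInfoVNC Γ lam ζ x - ζ^2 * PsiVNC Γ lam ζ x) + ζ^2 * PsiVNC Γ lam ζ x| := by
          congr 1; ring
      _ ≤ |meanInfoVNC Γ lam ζ x - ζ^2 * PsiVNC Γ lam ζ x| + |ζ^2 * PsiVNC Γ lam ζ x| :=
          abs_add_le _ _
      _ ≤ 6 * L^3 * ζ^3 + ζ^2 * (2 * L^2) := add_le_add hmean_est h1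
      _ ≤ 4 * ζ^2 * L^2 := by
          have e1 : 6 * L^3 * ζ^3 = 6 * (ζ^2 * L^2) * (ζ * L) := by ring
          have e2 : 6 * (ζ^2 * L^2) * (ζ * L) ≤ 6 * (ζ^2 * L^2) * (1/4) :=
            mul_le_mul_of_nonneg_left hζL (by positivity)
          have e3 : (0:ℝ) ≤ ζ^2 * L^2 := by positivity
          linarith
  have hT2 : (meanInfoVNC Γ lam ζ x)^2 ≤ 4 * L^3 * ζ^3 := by
    have h2 : (meanInfoVNC Γ lam ζ x)^2 ≤ (4 * ζ^2 * L^2)^2 := by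
      rw [← sq_abs]
      exact pow_le_pow_left₀ (abs_nonneg _) hTb 2
    have e1 : (4 * ζ^2 * L^2)^2 = 16 * (ζ^3 * L^3) * (ζ * L) := by ring
    have e2 : 16 * (ζ^3 * L^3) * (ζ * L) ≤ 16 * (ζ^3 * L^3) * (1/4) :=
      mul_le_mul_of_nonneg_left hζL (by positivity)
    linarith
  have hnu_est : |nu (VNC Γ lam ζ) x - 2 * ζ^2 * PsiVNC Γ lam ζ x| ≤ 21 * L^3 * ζ^3 := by
    rw [hnu]
    calc |(∑ y, VNC Γ lam ζ x y * (iStar (VNC Γ lam ζ) x y)^2)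
          - (meanInfoVNC Γ lam ζ x)^2 - 2 * ζ^2 * PsiVNC Γ lam ζ x|
        = |((∑ y, VNC Γ lam ζ x y * (iStar (VNC Γ lam ζ) x y)^2)
            - 2 * ζ^2 * PsiVNC Γ lam ζ x) - (meanInfoVNC Γ lam ζ x)^2| := by
          congr 1; ring
      _ ≤ |(∑ y, VNC Γ lam ζ x y * (iStar (VNC Γ lam ζ) x y)^2)
            - 2 * ζ^2 * PsiVNC Γ lam ζ x| + |(meanInfoVNC Γ lam ζ x)^2| := abs_sub _ _
      _ ≤ 17 * L^3 * ζ^3 + 4 * L^3 * ζ^3 := by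
          refine add_le_add hS2_est ?_
          rw [abs_of_nonneg (sq_nonneg _)]
          exact hT2
      _ = 21 * L^3 * ζ^3 := by ring
  have hpos3 : 0 < L^3 * ζ^3 := by positivity
  have h34 : |nu (VNC Γ lam ζ) x - 2 * meanInfoVNC Γ lam ζ x| ≤ 100 * L^3 * ζ^3 := by
    calc |nu (VNC Γ lam ζ) x - 2 * meanInfoVNC Γ lam ζ x|
        = |(nu (VNC Γ lam ζ) x - 2 * ζ^2 * PsiVNC Γ lam ζ x)
            + (-2) * (meanInfoVNC Γ lam ζ x - ζ^2 * PsiVNC Γ lam ζ x)| := by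
          congr 1; ring
      _ ≤ |nu (VNC Γ lam ζ) x - 2 * ζ^2 * PsiVNC Γ lam ζ x|
            + |(-2) * (meanInfoVNC Γ lam ζ x - ζ^2 * PsiVNC Γ lam ζ x)| := abs_add_le _ _
      _ ≤ 21 * L^3 * ζ^3 + 2 * (6 * L^3 * ζ^3) := by
          refine add_le_add hnu_est ?_
          rw [abs_mul, abs_neg, abs_two]
          linarith [hmean_est]
      _ ≤ 100 * L^3 * ζ^3 := by linarith [hpos3]
  refine ⟨hmean_est.trans (by linarith [hpos3]), hnu_est.trans (by linarith [hpos3]), ?_, ?_⟩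
  · intro hC
    rw [← hC]
    exact h34
  · intro _
    rw [rhoVNC, show capacity (VNC Γ lam ζ)
        - (capacity (VNC Γ lam ζ) - meanInfoVNC Γ lam ζ x) = meanInfoVNC Γ lam ζ x from by ring]
    exact h34

end Paper
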